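/- Let P₁, P₂ : ℝ → ℝ^{n × n} and Q₁₁, Q₁₂, Q₂₁, Q₂₂ ∈ ℝ^{n × n} satisfy [[Q₁₁, Q₁₂], [Q₂₁, Q₂₂]] = [[P₁(0), P₂(0)], [P₁(1), P₂(1)]]⁻¹ (the block matrix being invertible). Let G, F : ℝⁿ → ℝⁿ, let h : ℝ × ℝⁿ → ℝⁿ be arbitrary, write h₀(x) := h(0, x) and h_f(x) := h(1, x), and define Γ(κ, x, Ω) := Ω(h(κ, x) − Σ_{i=1}^{2} P_i(κ) Q_{i1} h₀(x) − Σ_{i=1}^{2} P_i(κ) Q_{i2} h_f(x)) + Σ_{i=1}^{2} P_i(κ) Q_{i1} G(x) + Σ_{i=1}^{2} P_i(κ) Q_{i2} F(x). Then for every Ω ∈ ℝ^{n × n} and every x ∈ ℝⁿ, Γ(0, x, Ω) = G(x) and Γ(1, x, Ω) = F(x). -/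

import Mathlib

/-! The four block identities of `P Q = 1` say that the coefficient matrices
`P₁ κ Q₁₁ + P₂ κ Q₂₁` and `P₁ κ Q₁₂ + P₂ κ Q₂₂` are `(1, 0)` at `κ = 0` and `(0, 1)` at `κ = 1`;
hence at both ends the argument of `Ω` cancels to `0` and only `G x`, resp. `F x`, survives. -/

open Matrix

theorem Matrix.fromBlocks_mul_fromBlocks_eq_one_iff {l m α : Type*} [Fintype l] [Fintype m]
    [DecidableEq l] [DecidableEq m] [Semiring α]
    (A : Matrix l l α) (B : Matrix l m α) (C : Matrix m l α) (D : Matrix m m α)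
    (A' : Matrix l l α) (B' : Matrix l m α) (C' : Matrix m l α) (D' : Matrix m m α) :
    fromBlocks A B C D * fromBlocks A' B' C' D' = 1 ↔
      A * A' + B * C' = 1 ∧ A * B' + B * D' = 0 ∧ C * A' + D * C' = 0 ∧ C * B' + D * D' = 1 := by
  rw [fromBlocks_multiply, ← fromBlocks_one, fromBlocks_inj]

/-- Condition (i) in the paper's definition of a TFC-based homotopy function
(Eqs. (15)–(18)): the TFC-based homotopy function `Γ` satisfies the boundary
conditions `Γ(0, x, Ω) = G(x)` and `Γ(1, x, Ω) = F(x)` for arbitrary `Ω`. -/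
theorem tfc_homotopy_boundary_conditions
    (n : ℕ)
    (P₁ P₂ : ℝ → Matrix (Fin n) (Fin n) ℝ)
    (Q₁₁ Q₁₂ Q₂₁ Q₂₂ : Matrix (Fin n) (Fin n) ℝ)
    (hP : IsUnit (Matrix.fromBlocks (P₁ 0) (P₂ 0) (P₁ 1) (P₂ 1)))
    (hQ : Matrix.fromBlocks Q₁₁ Q₁₂ Q₂₁ Q₂₂
        = (Matrix.fromBlocks (P₁ 0) (P₂ 0) (P₁ 1) (P₂ 1))⁻¹)
    (G F : (Fin n → ℝ) → (Fin n → ℝ))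
    (h : ℝ → (Fin n → ℝ) → (Fin n → ℝ))
    (Γ : ℝ → (Fin n → ℝ) → Matrix (Fin n) (Fin n) ℝ → (Fin n → ℝ))
    (hΓ : Γ = fun κ x Ω =>
        Ω.mulVec (h κ x
            - (P₁ κ * Q₁₁ + P₂ κ * Q₂₁).mulVec (h 0 x)
            - (P₁ κ * Q₁₂ + P₂ κ * Q₂₂).mulVec (h 1 x))
        + (P₁ κ * Q₁₁ + P₂ κ * Q₂₁).mulVec (G x)
        + (P₁ κ * Q₁₂ + P₂ κ * Q₂₂).mulVec (F x)) :
    ∀ (Ω : Matrix (Fin n) (Fin n) ℝ) (x : Fin n → ℝ),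
      Γ 0 x Ω = G x ∧ Γ 1 x Ω = F x := by
  have hPQ : fromBlocks (P₁ 0) (P₂ 0) (P₁ 1) (P₂ 1) * fromBlocks Q₁₁ Q₁₂ Q₂₁ Q₂₂ = 1 := by
    rw [hQ, mul_nonsing_inv _ ((isUnit_iff_isUnit_det _).mp hP)]
  obtain ⟨h₁₁, h₁₂, h₂₁, h₂₂⟩ := (fromBlocks_mul_fromBlocks_eq_one_iff ..).mp hPQ
  intro Ω x
  subst hΓ
  exact ⟨by simp [h₁₁, h₁₂], by simp [h₂₁, h₂₂]⟩
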